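/- Let d ≥ 2 and for each i = 1,…,d let K_i ⊆ ℝ be the attractor of an IFS {φ_{k,i}(x) = r_{k,i}x + a_{k,i}}_{k=1}^{ℓ_i} with ℓ_i ≥ 2 and r_{k,i} ∈ (0,1), let A_i = inf K_i, B_i = sup K_i with A_i < B_i, and assume the maps are ordered so that φ_{k,i}(A_i) ≤ φ_{k+1,i}(A_i) for 1 ≤ k ≤ ℓ_i − 1. Set s_min = min over all i,k of r_{k,i}. If for every i ∈ {1,…,d} and every k ∈ {1,…,ℓ_i − 1} one has s_min·(Σ_{j≠i} (B_j − A_j)) + (φ_{k,i}(B_i) − φ_{k+1,i}(A_i)) ≥ 0, then the arithmetic sum K_1 + K_2 + ⋯ + K_d = {x_1 + x_2 + ⋯ + x_d : x_i ∈ K_i for each i} is a finite union of closed intervals: there exist n ∈ ℕ and reals c_1 ≤ d_1, …, c_n ≤ d_n with K_1 + ⋯ + K_d = ⋃_{j=1}^n [c_j, d_j]. -/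

import Mathlib

/-!
The sum is in fact the whole interval `[∑ A i, ∑ B i]`. Given `y` in it, keep one affine
self-map `x ↦ s i * x + t i` of each `K i` (a cylinder map) such that `y` lies in the sum of
the cylinder intervals `s i • [A i, B i] + t i`, with slopes comparable up to the factor `smin`.
Refine the cylinder of largest slope into its first-level subcylinders: the gap between two
consecutive ones is at most `smin` times its slope times the sum of the other widths, which the
other cylinders cover, so `y` stays in the sum for one of the subcylinders. Each refinement
shrinks `∑ i, s i` by a fixed factor, so `y` is a limit of points of the closed sumset.
-/

open Set Filter Topology Function

theorem Fin.monotone_of_le_add_one {α : Type*} [Preorder α] {n : ℕ} {f : Fin n → α}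
    (hf : ∀ (k : Fin n) (hk : (k : ℕ) + 1 < n), f k ≤ f ⟨k + 1, hk⟩) : Monotone f := by
  cases n with
  | zero => exact fun i => i.elim0
  | succ n => exact Fin.monotone_iff_le_succ.2 fun i => hf i.castSucc (by simp)

theorem Fin.exists_mem_Icc_of_le_succ {α : Type*} [LinearOrder α] {n : ℕ} {L U : Fin n → α}
    {z : α} (hL : Monotone L) (hgap : ∀ (k : Fin n) (hk : (k : ℕ) + 1 < n), L ⟨k + 1, hk⟩ ≤ U k)
    (hlow : ∃ k, L k ≤ z) (hhigh : ∃ k, z ≤ U k) : ∃ k, z ∈ Icc (L k) (U k) := by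
  obtain ⟨k₀, hk₀, hmax⟩ := (Finset.univ.filter fun k => L k ≤ z).exists_max_image id
    (by obtain ⟨k, hk⟩ := hlow; exact ⟨k, by simpa using hk⟩)
  simp only [Finset.mem_filter, Finset.mem_univ, true_and, id] at hk₀ hmax
  by_cases hlast : (k₀ : ℕ) + 1 < n
  · refine ⟨k₀, hk₀, le_of_not_gt fun hz => ?_⟩
    have := hmax ⟨k₀ + 1, hlast⟩ ((hgap k₀ hlast).trans hz.le)
    simp [Fin.le_def] at this
  · obtain ⟨k, hk⟩ := hhigh
    exact ⟨k, (hL (Fin.le_def.2 (by omega))).trans hk₀, hk⟩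

theorem Set.mapsTo_of_eq_iUnion_image {α κ : Type*} {K : Set α} {f : κ → α → α}
    (hK : K = ⋃ k, f k '' K) (k : κ) : MapsTo (f k) K K := fun x hx => by
  rw [hK]
  exact mem_iUnion_of_mem k (mem_image_of_mem _ hx)

theorem IsLeast.exists_apply_le_of_eq_iUnion_image {α κ : Type*} [Preorder α] {K : Set α}
    {a : α} {f : κ → α → α} (ha : IsLeast K a) (hf : ∀ k, Monotone (f k))
    (hK : K = ⋃ k, f k '' K) : ∃ k, f k a ≤ a := by
  obtain ⟨k, x, hx, rfl⟩ := mem_iUnion.1 (hK ▸ ha.1)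
  exact ⟨k, hf k (ha.2 hx)⟩

theorem IsGreatest.exists_le_apply_of_eq_iUnion_image {α κ : Type*} [Preorder α] {K : Set α}
    {a : α} {f : κ → α → α} (ha : IsGreatest K a) (hf : ∀ k, Monotone (f k))
    (hK : K = ⋃ k, f k '' K) : ∃ k, a ≤ f k a := by
  obtain ⟨k, x, hx, rfl⟩ := mem_iUnion.1 (hK ▸ ha.1)
  exact ⟨k, hf k (ha.2 hx)⟩

structure IsOrderedSelfSimilar (K : Set ℝ) (A B : ℝ) {n : ℕ} (r a : Fin n → ℝ) : Prop where
  pos : ∀ k, 0 < r k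
  eq_iUnion : K = ⋃ k, (fun x => r k * x + a k) '' K
  isLeast : IsLeast K A
  isGreatest : IsGreatest K B
  left_le_succ : ∀ (k : Fin n) (hk : (k : ℕ) + 1 < n),
    r k * A + a k ≤ r ⟨k + 1, hk⟩ * A + a ⟨k + 1, hk⟩

theorem IsOrderedSelfSimilar.exists_cylinder_of_gap_le {n : ℕ} {K : Set ℝ} {A B : ℝ}
    {r a : Fin n → ℝ} (hK : IsOrderedSelfSimilar K A B r a) {s g z : ℝ} (hs : 0 < s)
    (hgap : ∀ (k : Fin n) (hk : (k : ℕ) + 1 < n),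
      s * ((r ⟨k + 1, hk⟩ * A + a ⟨k + 1, hk⟩) - (r k * B + a k)) ≤ g)
    (hz : s * A ≤ z) (hz' : z ≤ s * B + g) :
    ∃ k, s * (r k * A + a k) ≤ z ∧ z ≤ s * (r k * B + a k) + g := by
  have hmono : ∀ k, Monotone fun x => r k * x + a k :=
    fun k => (monotone_id.const_mul (hK.pos k).le).add_const _
  obtain ⟨k₁, hk₁⟩ := hK.isLeast.exists_apply_le_of_eq_iUnion_image hmono hK.eq_iUnion
  obtain ⟨k₂, hk₂⟩ := hK.isGreatest.exists_le_apply_of_eq_iUnion_image hmono hK.eq_iUnion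
  refine Fin.exists_mem_Icc_of_le_succ (L := fun k => s * (r k * A + a k))
    (U := fun k => s * (r k * B + a k) + g) ?_ (fun k hk => ?_) ⟨k₁, ?_⟩ ⟨k₂, ?_⟩
  · exact Fin.monotone_of_le_add_one fun k hk =>
      mul_le_mul_of_nonneg_left (hK.left_le_succ k hk) hs.le
  · linarith [hgap k hk]
  · exact (mul_le_mul_of_nonneg_left hk₁ hs.le).trans hz
  · exact hz'.trans (by gcongr)

variable {ι : Type*} [Fintype ι]

def sumset (K : ι → Set ℝ) : Set ℝ :=
  {y | ∃ x : ι → ℝ, (∀ i, x i ∈ K i) ∧ ∑ i, x i = y}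

theorem isCompact_sumset {K : ι → Set ℝ} (hK : ∀ i, IsCompact (K i)) :
    IsCompact (sumset K) := by
  have : sumset K = (fun x : ι → ℝ => ∑ i, x i) '' univ.pi K := by
    ext
    simp [sumset]
  rw [this]
  exact (isCompact_univ_pi hK).image (continuous_finsetSum _ fun i _ => continuous_apply i)

theorem sumset_subset_Icc {K : ι → Set ℝ} {A B : ι → ℝ} (hA : ∀ i, A i ∈ lowerBounds (K i))
    (hB : ∀ i, B i ∈ upperBounds (K i)) : sumset K ⊆ Icc (∑ i, A i) (∑ i, B i) := by
  rintro _ ⟨x, hx, rfl⟩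
  exact ⟨Finset.sum_le_sum fun i _ => hA i (hx i), Finset.sum_le_sum fun i _ => hB i (hx i)⟩

theorem sum_update_mul_add [DecidableEq ι] (s t c : ι → ℝ) (i : ι) (v w : ℝ) :
    ∑ j, (update s i v j * c j + update t i w j)
      = v * c i + w + ∑ j ∈ Finset.univ.erase i, (s j * c j + t j) := by
  rw [← Finset.add_sum_erase _ _ (Finset.mem_univ i), update_self, update_self]
  congr 1
  refine Finset.sum_congr rfl fun j hj => ?_
  rw [update_of_ne (Finset.ne_of_mem_erase hj), update_of_ne (Finset.ne_of_mem_erase hj)]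

structure IsCylinderTuple (K : ι → Set ℝ) (A B : ι → ℝ) (σ y : ℝ) (s t : ι → ℝ) : Prop where
  pos : ∀ i, 0 < s i
  mapsTo : ∀ i, MapsTo (fun x => s i * x + t i) (K i) (K i)
  comparable : ∀ i j, σ * s i ≤ s j
  sum_le : ∑ i, (s i * A i + t i) ≤ y
  le_sum : y ≤ ∑ i, (s i * B i + t i)

namespace IsCylinderTuple

variable {K : ι → Set ℝ} {A B : ι → ℝ} {σ y : ℝ} {s t : ι → ℝ}

theorem one_zero (hσ : σ ≤ 1) (hy : y ∈ Icc (∑ i, A i) (∑ i, B i)) :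
    IsCylinderTuple K A B σ y 1 0 where
  pos _ := one_pos
  mapsTo _ _ hx := by simpa using hx
  comparable _ _ := by simpa using hσ
  sum_le := by simpa using hy.1
  le_sum := by simpa using hy.2

theorem exists_dist_le (h : IsCylinderTuple K A B σ y s t) (hA : ∀ i, A i ∈ K i)
    (hAB : ∀ i, A i ≤ B i) :
    ∃ p ∈ sumset K, dist y p ≤ (∑ i, s i) * ∑ i, (B i - A i) := by
  refine ⟨∑ i, (s i * A i + t i), ⟨_, fun i => h.mapsTo i (hA i), rfl⟩, ?_⟩
  have hwidth : ∑ i, (s i * B i + t i) - ∑ i, (s i * A i + t i) = ∑ i, s i * (B i - A i) := by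
    rw [← Finset.sum_sub_distrib]
    exact Finset.sum_congr rfl fun i _ => by ring
  have hle : ∑ i, s i * (B i - A i) ≤ ∑ i, s i * ∑ j, (B j - A j) :=
    Finset.sum_le_sum fun i _ => mul_le_mul_of_nonneg_left
      (Finset.single_le_sum (fun j _ => sub_nonneg.2 (hAB j)) (Finset.mem_univ i)) (h.pos i).le
  rw [Real.dist_eq, abs_of_nonneg (sub_nonneg.2 h.sum_le), Finset.sum_mul]
  linarith [h.le_sum]

theorem update [DecidableEq ι] (h : IsCylinderTuple K A B σ y s t) {i₀ : ι}
    (hmax : ∀ j, s j ≤ s i₀) {ρ c : ℝ} (hσ₀ : 0 ≤ σ) (hσρ : σ ≤ ρ) (hρ₀ : 0 < ρ) (hρ₁ : ρ ≤ 1)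
    (hmaps : MapsTo (fun x => ρ * x + c) (K i₀) (K i₀))
    (hlo : s i₀ * (ρ * A i₀ + c) + t i₀ + ∑ j ∈ Finset.univ.erase i₀, (s j * A j + t j) ≤ y)
    (hhi : y ≤ s i₀ * (ρ * B i₀ + c) + t i₀ + ∑ j ∈ Finset.univ.erase i₀, (s j * B j + t j)) :
    IsCylinderTuple K A B σ y (Function.update s i₀ (s i₀ * ρ))
      (Function.update t i₀ (s i₀ * c + t i₀)) where
  pos i := by
    rcases eq_or_ne i i₀ with rfl | hi
    · simpa using mul_pos (h.pos i) hρ₀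
    · simpa [hi] using h.pos i
  mapsTo i := by
    rcases eq_or_ne i i₀ with rfl | hi
    · intro x hx
      convert h.mapsTo i (hmaps hx) using 1
      simp only [update_self]
      ring
    · simpa [hi] using h.mapsTo i
  comparable i j := by
    have hs₀ := (h.pos i₀).le
    simp only [update_apply]
    split_ifs with hi hj hj
    · nlinarith [mul_nonneg hs₀ hρ₀.le]
    · nlinarith [h.comparable i₀ j, mul_nonneg hσ₀ hs₀]
    · nlinarith [hmax i]
    · exact h.comparable i j
  sum_le := by
    rw [sum_update_mul_add]
    linarith
  le_sum := by
    rw [sum_update_mul_add]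
    linarith

theorem exists_refine [DecidableEq ι] {ℓ : ι → ℕ} {r a : (i : ι) → Fin (ℓ i) → ℝ}
    (hK : ∀ i, IsOrderedSelfSimilar (K i) (A i) (B i) (r i) (a i)) (hr₁ : ∀ i k, r i k ≤ 1)
    (hσ₀ : 0 ≤ σ) (hσr : ∀ i k, σ ≤ r i k)
    (hcond : ∀ i : ι, ∀ k : Fin (ℓ i), ∀ hk : (k : ℕ) + 1 < ℓ i,
      0 ≤ σ * (∑ j ∈ Finset.univ.erase i, (B j - A j))
          + ((r i k * B i + a i k)
              - (r i ⟨(k : ℕ) + 1, hk⟩ * A i + a i ⟨(k : ℕ) + 1, hk⟩)))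
    (h : IsCylinderTuple K A B σ y s t) {i₀ : ι} (hmax : ∀ j, s j ≤ s i₀) :
    ∃ k, IsCylinderTuple K A B σ y (Function.update s i₀ (s i₀ * r i₀ k))
      (Function.update t i₀ (s i₀ * a i₀ k + t i₀)) := by
  set P := ∑ j ∈ Finset.univ.erase i₀, (s j * A j + t j)
  set Q := ∑ j ∈ Finset.univ.erase i₀, (s j * B j + t j)
  have hlo : s i₀ * A i₀ + t i₀ + P ≤ y :=
    (Finset.add_sum_erase _ _ (Finset.mem_univ i₀)).trans_le h.sum_le
  have hhi : y ≤ s i₀ * B i₀ + t i₀ + Q :=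
    h.le_sum.trans_eq (Finset.add_sum_erase _ _ (Finset.mem_univ i₀)).symm
  -- the other cylinders have slopes at least `σ * s i₀`, so their widths cover the gap
  have hgap : s i₀ * (σ * ∑ j ∈ Finset.univ.erase i₀, (B j - A j)) ≤ Q - P := by
    rw [← Finset.sum_sub_distrib, mul_left_comm, Finset.mul_sum, Finset.mul_sum]
    refine Finset.sum_le_sum fun j _ => ?_
    have := mul_le_mul_of_nonneg_right (h.comparable i₀ j)
      (sub_nonneg.2 ((hK j).isLeast.2 (hK j).isGreatest.1))
    linarith
  obtain ⟨k, hk₁, hk₂⟩ := (hK i₀).exists_cylinder_of_gap_le (h.pos i₀) (g := Q - P)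
    (z := y - P - t i₀)
    (fun k hk => (mul_le_mul_of_nonneg_left (by linarith [hcond i₀ k hk]) (h.pos i₀).le).trans
      hgap) (by linarith) (by linarith)
  exact ⟨k, h.update hmax hσ₀ (hσr i₀ k) ((hK i₀).pos k) (hr₁ i₀ k)
    (mapsTo_of_eq_iUnion_image (hK i₀).eq_iUnion k) (by linarith) (by linarith)⟩

end IsCylinderTuple

theorem exists_lt_of_forall_exists_le_mul {α : Type*} {P : α → Prop} {f : α → ℝ} {θ : ℝ}
    (hθ₀ : 0 ≤ θ) (hθ₁ : θ < 1) (h₀ : ∃ x, P x) (hstep : ∀ x, P x → ∃ x', P x' ∧ f x' ≤ θ * f x)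
    {ε : ℝ} (hε : 0 < ε) : ∃ x, P x ∧ f x < ε := by
  obtain ⟨x₀, hx₀⟩ := h₀
  have hiter : ∀ n : ℕ, ∃ x, P x ∧ f x ≤ θ ^ n * f x₀ := by
    intro n
    induction n with
    | zero => exact ⟨x₀, hx₀, by simp⟩
    | succ n ih =>
      obtain ⟨x, hx, hfx⟩ := ih
      obtain ⟨x', hx', hfx'⟩ := hstep x hx
      refine ⟨x', hx', hfx'.trans ?_⟩
      rw [pow_succ', mul_assoc]
      exact mul_le_mul_of_nonneg_left hfx hθ₀
  have hlim : Tendsto (fun n => θ ^ n * f x₀) atTop (𝓝 0) := by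
    simpa using (tendsto_pow_atTop_nhds_zero_of_lt_one hθ₀ hθ₁).mul_const (f x₀)
  obtain ⟨n, hn⟩ := (hlim.eventually (gt_mem_nhds hε)).exists
  obtain ⟨x, hx, hfx⟩ := hiter n
  exact ⟨x, hx, hfx.trans_lt hn⟩

theorem exists_nonneg_lt_one_forall_le {α : Type*} [Finite α] {f : α → ℝ} (hf : ∀ x, f x < 1) :
    ∃ ρ, 0 ≤ ρ ∧ ρ < 1 ∧ ∀ x, f x ≤ ρ := by
  rcases isEmpty_or_nonempty α with _ | _
  · exact ⟨0, le_rfl, one_pos, isEmptyElim⟩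
  · obtain ⟨x₀, hx₀⟩ := Finite.exists_max f
    exact ⟨max (f x₀) 0, le_max_right _ _, max_lt (hf x₀) one_pos,
      fun x => (hx₀ x).trans (le_max_left _ _)⟩

section SelfSimilar

variable [DecidableEq ι] [Nonempty ι] {ℓ : ι → ℕ} {r a : (i : ι) → Fin (ℓ i) → ℝ}
  {K : ι → Set ℝ} {A B : ι → ℝ} {σ : ℝ}

theorem exists_isCylinderTuple_sum_lt
    (hK : ∀ i, IsOrderedSelfSimilar (K i) (A i) (B i) (r i) (a i)) (hr₁ : ∀ i k, r i k < 1)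
    (hσ₀ : 0 ≤ σ) (hσ₁ : σ ≤ 1) (hσr : ∀ i k, σ ≤ r i k)
    (hcond : ∀ i : ι, ∀ k : Fin (ℓ i), ∀ hk : (k : ℕ) + 1 < ℓ i,
      0 ≤ σ * (∑ j ∈ Finset.univ.erase i, (B j - A j))
          + ((r i k * B i + a i k)
              - (r i ⟨(k : ℕ) + 1, hk⟩ * A i + a i ⟨(k : ℕ) + 1, hk⟩)))
    {y : ℝ} (hy : y ∈ Icc (∑ i, A i) (∑ i, B i)) {ε : ℝ} (hε : 0 < ε) :
    ∃ s t, IsCylinderTuple K A B σ y s t ∧ ∑ i, s i < ε := by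
  obtain ⟨ρ, hρ₀, hρ₁, hrρ⟩ := exists_nonneg_lt_one_forall_le
    (f := fun p : (i : ι) × Fin (ℓ i) => r p.1 p.2) fun p => hr₁ p.1 p.2
  set N : ℝ := (Fintype.card ι : ℝ)
  have hN : 1 ≤ N := by simp [N, Nat.one_le_iff_ne_zero]
  -- refining a cylinder of largest slope `s i₀ ≥ (∑ i, s i) / N` saves at least `(1 - ρ) * s i₀`
  have hstep : ∀ p : (ι → ℝ) × (ι → ℝ), IsCylinderTuple K A B σ y p.1 p.2 →
      ∃ p' : (ι → ℝ) × (ι → ℝ), IsCylinderTuple K A B σ y p'.1 p'.2 ∧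
        ∑ i, p'.1 i ≤ (1 - (1 - ρ) / N) * ∑ i, p.1 i := by
    rintro ⟨s, t⟩ h
    obtain ⟨i₀, hmax⟩ := Finite.exists_max s
    obtain ⟨k, hk⟩ := h.exists_refine hK (fun i k => (hr₁ i k).le) hσ₀ hσr hcond hmax
    refine ⟨(_, _), hk, ?_⟩
    have hrk : r i₀ k ≤ ρ := hrρ ⟨i₀, k⟩
    have hcard : (∑ j, s j) / N ≤ s i₀ := by
      rw [div_le_iff₀ (by linarith)]
      simpa [N, mul_comm] using Finset.sum_le_card_nsmul Finset.univ s _ fun j _ => hmax j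
    have hsave : (1 - ρ) / N * ∑ j, s j ≤ (1 - r i₀ k) * s i₀ := by
      rw [div_mul_eq_mul_div, mul_div_assoc]
      exact mul_le_mul (by linarith) hcard
        (div_nonneg (Finset.sum_nonneg fun j _ => (h.pos j).le) (by linarith))
        (by linarith [hr₁ i₀ k])
    calc ∑ j, Function.update s i₀ (s i₀ * r i₀ k) j
        = ∑ j, s j - (1 - r i₀ k) * s i₀ := by
          rw [Finset.sum_update_of_mem (Finset.mem_univ i₀), Finset.sdiff_singleton_eq_erase,
            ← Finset.add_sum_erase _ _ (Finset.mem_univ i₀)]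
          ring
      _ ≤ (1 - (1 - ρ) / N) * ∑ j, s j := by linarith
  obtain ⟨⟨s, t⟩, h, hs⟩ := exists_lt_of_forall_exists_le_mul
    (sub_nonneg.2 ((div_le_one (by linarith)).2 (by linarith)))
    (sub_lt_self _ (div_pos (by linarith) (by linarith)))
    ⟨((1 : ι → ℝ), (0 : ι → ℝ)), IsCylinderTuple.one_zero hσ₁ hy⟩ hstep hε
  exact ⟨s, t, h, hs⟩

theorem sumset_eq_Icc_of_gap_le (hKc : ∀ i, IsCompact (K i))
    (hK : ∀ i, IsOrderedSelfSimilar (K i) (A i) (B i) (r i) (a i)) (hr₁ : ∀ i k, r i k < 1)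
    (hσ₀ : 0 ≤ σ) (hσ₁ : σ ≤ 1) (hσr : ∀ i k, σ ≤ r i k)
    (hcond : ∀ i : ι, ∀ k : Fin (ℓ i), ∀ hk : (k : ℕ) + 1 < ℓ i,
      0 ≤ σ * (∑ j ∈ Finset.univ.erase i, (B j - A j))
          + ((r i k * B i + a i k)
              - (r i ⟨(k : ℕ) + 1, hk⟩ * A i + a i ⟨(k : ℕ) + 1, hk⟩))) :
    sumset K = Icc (∑ i, A i) (∑ i, B i) := by
  refine (sumset_subset_Icc (fun i => (hK i).isLeast.2) (fun i => (hK i).isGreatest.2)).antisymm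
    fun y hy =>
    (isCompact_sumset hKc).isClosed.closure_subset (Metric.mem_closure_iff.2 fun ε hε => ?_)
  have hAB : ∀ i, A i ≤ B i := fun i => (hK i).isLeast.2 (hK i).isGreatest.1
  set W := ∑ i, (B i - A i)
  have hW : 0 ≤ W := Finset.sum_nonneg fun i _ => sub_nonneg.2 (hAB i)
  obtain ⟨s, t, h, hs⟩ := exists_isCylinderTuple_sum_lt hK hr₁ hσ₀ hσ₁ hσr hcond hy
    (div_pos hε (by linarith : 0 < W + 1))
  obtain ⟨p, hp, hdist⟩ := h.exists_dist_le (fun i => (hK i).isLeast.1) hAB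
  refine ⟨p, hp, hdist.trans_lt ?_⟩
  rw [lt_div_iff₀ (by linarith)] at hs
  nlinarith [Finset.sum_nonneg fun i (_ : i ∈ Finset.univ) => (h.pos i).le]

end SelfSimilar

theorem sum_of_self_similar_sets_finite_union_of_intervals_general
    (d : ℕ)
    (ℓ : Fin d → ℕ)
    (r a : (i : Fin d) → Fin (ℓ i) → ℝ)
    (hr : ∀ i k, r i k ∈ Set.Ioo (0 : ℝ) 1)
    (K : Fin d → Set ℝ)
    (hKne : ∀ i, (K i).Nonempty)
    (hKc : ∀ i, IsCompact (K i))
    (hK : ∀ i, K i = ⋃ k : Fin (ℓ i), (fun x => r i k * x + a i k) '' K i)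
    (A B : Fin d → ℝ)
    (hA : ∀ i, A i = sInf (K i)) (hB : ∀ i, B i = sSup (K i))
    (horder : ∀ i, ∀ k : Fin (ℓ i), ∀ hk : (k : ℕ) + 1 < ℓ i,
      r i k * A i + a i k ≤ r i ⟨(k : ℕ) + 1, hk⟩ * A i + a i ⟨(k : ℕ) + 1, hk⟩)
    (smin : ℝ)
    (hsmin_le : ∀ i k, smin ≤ r i k)
    (hsmin_mem : ∃ i k, smin = r i k)
    (hcond : ∀ i : Fin d, ∀ k : Fin (ℓ i), ∀ hk : (k : ℕ) + 1 < ℓ i,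
      0 ≤ smin * (∑ j ∈ Finset.univ.erase i, (B j - A j))
          + ((r i k * B i + a i k)
              - (r i ⟨(k : ℕ) + 1, hk⟩ * A i + a i ⟨(k : ℕ) + 1, hk⟩))) :
    ∃ (n : ℕ) (c e : Fin n → ℝ), (∀ j, c j ≤ e j) ∧
      {y : ℝ | ∃ x : Fin d → ℝ, (∀ i, x i ∈ K i) ∧ (∑ i, x i) = y}
        = ⋃ j : Fin n, Set.Icc (c j) (e j) := by
  obtain ⟨i₁, k₁, hsmin⟩ := hsmin_mem
  have : Nonempty (Fin d) := ⟨i₁⟩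
  have hSS : ∀ i, IsOrderedSelfSimilar (K i) (A i) (B i) (r i) (a i) := fun i =>
    ⟨fun k => (hr i k).1, hK i, hA i ▸ (hKc i).isLeast_sInf (hKne i),
      hB i ▸ (hKc i).isGreatest_sSup (hKne i), horder i⟩
  refine ⟨1, fun _ => ∑ i, A i, fun _ => ∑ i, B i,
    fun _ => Finset.sum_le_sum fun i _ => (hSS i).isLeast.2 (hSS i).isGreatest.1, ?_⟩
  rw [iUnion_const]
  exact sumset_eq_Icc_of_gap_le hKc hSS (fun i k => (hr i k).2) (hsmin ▸ (hr i₁ k₁).1.le)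
    (hsmin ▸ (hr i₁ k₁).2.le) hsmin_le hcond

/-- The arithmetic sum of self-similar sets with positive ratios is a finite union of
closed intervals, under the gap condition. -/
theorem sum_of_self_similar_sets_finite_union_of_intervals
    (d : ℕ) (hd : 2 ≤ d)
    (ℓ : Fin d → ℕ) (hℓ : ∀ i, 2 ≤ ℓ i)
    (r a : (i : Fin d) → Fin (ℓ i) → ℝ)
    (hr : ∀ i k, r i k ∈ Set.Ioo (0 : ℝ) 1)
    (K : Fin d → Set ℝ)
    (hKne : ∀ i, (K i).Nonempty)
    (hKc : ∀ i, IsCompact (K i))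
    (hK : ∀ i, K i = ⋃ k : Fin (ℓ i), (fun x => r i k * x + a i k) '' K i)
    (A B : Fin d → ℝ)
    (hA : ∀ i, A i = sInf (K i)) (hB : ∀ i, B i = sSup (K i))
    (hAB : ∀ i, A i < B i)
    (horder : ∀ i, ∀ k : Fin (ℓ i), ∀ hk : (k : ℕ) + 1 < ℓ i,
      r i k * A i + a i k ≤ r i ⟨(k : ℕ) + 1, hk⟩ * A i + a i ⟨(k : ℕ) + 1, hk⟩)
    (smin : ℝ)
    (hsmin_le : ∀ i k, smin ≤ r i k)
    (hsmin_mem : ∃ i k, smin = r i k)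
    (hcond : ∀ i : Fin d, ∀ k : Fin (ℓ i), ∀ hk : (k : ℕ) + 1 < ℓ i,
      0 ≤ smin * (∑ j ∈ Finset.univ.erase i, (B j - A j))
          + ((r i k * B i + a i k)
              - (r i ⟨(k : ℕ) + 1, hk⟩ * A i + a i ⟨(k : ℕ) + 1, hk⟩))) :
    ∃ (n : ℕ) (c e : Fin n → ℝ), (∀ j, c j ≤ e j) ∧
      {y : ℝ | ∃ x : Fin d → ℝ, (∀ i, x i ∈ K i) ∧ (∑ i, x i) = y}
        = ⋃ j : Fin n, Set.Icc (c j) (e j) :=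
  sum_of_self_similar_sets_finite_union_of_intervals_general d ℓ r a hr K hKne hKc hK A B hA hB
    horder smin hsmin_le hsmin_mem hcond
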